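/- arXiv:2406.19003 — 4 statements merged into one kernel-verified Lean document; each statement's English description precedes it below -/
import Mathlib

section
/- Let n ≥ 2 and k ≥ 1 be integers, and for γ ≥ 0 let B_γ be the coefficient of h^γ in the formal power series ∏_{l=1}^{k} (Σ_{j=0}^{n} (h/l)^j)^{n+2} (with B_0 = 1). Then for k = n and all γ ≥ 0, one has B_{γ+1} ≤ 2 n² · B_γ. -/
open Polynomial Finset

/-- `B γ` : the coefficient of `h^γ` in `∏_{l=1}^{k} (Σ_{j=0}^{n} (h/l)^j)^{n+2}`. -/
noncomputable def Bcoeff (k n γ : ℕ) : ℝ :=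
  Polynomial.coeff
    (∏ l ∈ Finset.Icc 1 k,
      (∑ j ∈ Finset.range (n + 1), (Polynomial.C ((l : ℝ)⁻¹) * Polynomial.X) ^ j) ^ (n + 2)) γ

/-- A polynomial is `Good C` if its coefficients are nonnegative and each
coefficient is at most `C` times the previous one. -/
def Good (C : ℝ) (P : Polynomial ℝ) : Prop :=
  (∀ i, 0 ≤ P.coeff i) ∧ ∀ γ, P.coeff (γ + 1) ≤ C * P.coeff γ

lemma good_one : Good 0 (1 : Polynomial ℝ) := by
  constructor
  · intro i
    rcases eq_or_ne i 0 with h | h <;> simp [Polynomial.coeff_one, h]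
  · intro γ; simp [Polynomial.coeff_one]

lemma good_mul {C D : ℝ} {P S : Polynomial ℝ} (hC : 0 ≤ C) (hD : 0 ≤ D)
    (hP : Good C P) (hS : Good D S) : Good (C + D) (P * S) := by
  obtain ⟨hP0, hP1⟩ := hP
  obtain ⟨hS0, hS1⟩ := hS
  have hnn : ∀ m, 0 ≤ (P * S).coeff m := by
    intro m
    rw [Polynomial.coeff_mul]
    exact Finset.sum_nonneg fun x _ => mul_nonneg (hP0 _) (hS0 _)
  refine ⟨hnn, fun γ => ?_⟩
  rw [Polynomial.coeff_mul, Polynomial.coeff_mul, Finset.Nat.antidiagonal_succ,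
    Finset.sum_cons, Finset.sum_map]
  simp only [Function.Embedding.coe_prodMap, Function.Embedding.coeFn_mk,
    Function.Embedding.refl_apply, Prod.map_fst, Prod.map_snd, Nat.succ_eq_add_one]
  have h1 : P.coeff 0 * S.coeff (γ + 1) ≤ D * (P.coeff 0 * S.coeff γ) := by
    have := hS1 γ
    calc P.coeff 0 * S.coeff (γ + 1) ≤ P.coeff 0 * (D * S.coeff γ) :=
          mul_le_mul_of_nonneg_left this (hP0 0)
      _ = D * (P.coeff 0 * S.coeff γ) := by ring
  have h2 : ∑ x ∈ Finset.HasAntidiagonal.antidiagonal γ, P.coeff (x.1 + 1) * S.coeff x.2 ≤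
      C * ∑ x ∈ Finset.HasAntidiagonal.antidiagonal γ, P.coeff x.1 * S.coeff x.2 := by
    rw [Finset.mul_sum]
    refine Finset.sum_le_sum fun x _ => ?_
    calc P.coeff (x.1 + 1) * S.coeff x.2 ≤ (C * P.coeff x.1) * S.coeff x.2 :=
          mul_le_mul_of_nonneg_right (hP1 x.1) (hS0 _)
      _ = C * (P.coeff x.1 * S.coeff x.2) := by ring
  have h3 : P.coeff 0 * S.coeff γ ≤
      ∑ x ∈ Finset.HasAntidiagonal.antidiagonal γ, P.coeff x.1 * S.coeff x.2 := by
    have hmem : ((0 : ℕ), γ) ∈ Finset.HasAntidiagonal.antidiagonal γ := by simp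
    exact Finset.single_le_sum (f := fun x : ℕ × ℕ => P.coeff x.1 * S.coeff x.2)
      (fun x _ => mul_nonneg (hP0 _) (hS0 _)) hmem
  calc P.coeff 0 * S.coeff (γ + 1)
        + ∑ x ∈ Finset.HasAntidiagonal.antidiagonal γ, P.coeff (x.1 + 1) * S.coeff x.2
      ≤ D * (P.coeff 0 * S.coeff γ)
        + C * ∑ x ∈ Finset.HasAntidiagonal.antidiagonal γ, P.coeff x.1 * S.coeff x.2 :=
        add_le_add h1 h2
    _ ≤ D * (∑ x ∈ Finset.HasAntidiagonal.antidiagonal γ, P.coeff x.1 * S.coeff x.2)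
        + C * ∑ x ∈ Finset.HasAntidiagonal.antidiagonal γ, P.coeff x.1 * S.coeff x.2 :=
        add_le_add (mul_le_mul_of_nonneg_left h3 hD) le_rfl
    _ = (C + D) * ∑ x ∈ Finset.HasAntidiagonal.antidiagonal γ, P.coeff x.1 * S.coeff x.2 := by ring

lemma good_prod {ι : Type*} (s : Finset ι) (f : ι → Polynomial ℝ) (g : ι → ℝ)
    (hg : ∀ i ∈ s, 0 ≤ g i) (h : ∀ i ∈ s, Good (g i) (f i)) :
    Good (∑ i ∈ s, g i) (∏ i ∈ s, f i) := by
  induction s using Finset.cons_induction with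
  | empty => simpa using good_one
  | cons a s ha ih =>
    rw [Finset.prod_cons, Finset.sum_cons]
    have hgs : 0 ≤ ∑ i ∈ s, g i :=
      Finset.sum_nonneg fun i hi => hg i (Finset.mem_cons_of_mem hi)
    exact good_mul (hg a (Finset.mem_cons_self a s)) hgs
      (h a (Finset.mem_cons_self a s))
      (ih (fun i hi => hg i (Finset.mem_cons_of_mem hi))
          (fun i hi => h i (Finset.mem_cons_of_mem hi)))

lemma good_pow {C : ℝ} {P : Polynomial ℝ} (hC : 0 ≤ C) (hP : Good C P) (m : ℕ) :
    Good (m * C) (P ^ m) := by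
  induction m with
  | zero => simpa using good_one
  | succ m ih =>
    rw [pow_succ, Nat.cast_succ, add_mul, one_mul]
    exact good_mul (by positivity) hC ih hP

lemma coeff_S (n l : ℕ) (i : ℕ) :
    (∑ j ∈ Finset.range (n + 1), (Polynomial.C ((l : ℝ)⁻¹) * Polynomial.X) ^ j).coeff i
      = if i < n + 1 then ((l : ℝ)⁻¹) ^ i else 0 := by
  rw [Polynomial.finset_sum_coeff]
  have : ∀ j, ((Polynomial.C ((l : ℝ)⁻¹) * Polynomial.X) ^ j).coeff i
      = if j = i then ((l : ℝ)⁻¹) ^ i else 0 := by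
    intro j
    rw [mul_pow, ← Polynomial.C_pow, Polynomial.coeff_C_mul, Polynomial.coeff_X_pow]
    split_ifs with h1 h2 h2 <;> simp_all
  simp only [this]
  rw [Finset.sum_ite_eq' (Finset.range (n + 1))]
  simp [Finset.mem_range]

lemma good_S (n l : ℕ) (hl : 1 ≤ l) :
    Good 1 (∑ j ∈ Finset.range (n + 1), (Polynomial.C ((l : ℝ)⁻¹) * Polynomial.X) ^ j) := by
  have hl1 : (l : ℝ)⁻¹ ≤ 1 := by
    rw [inv_le_one_iff₀]
    right
    exact_mod_cast hl
  have hl0 : (0 : ℝ) ≤ (l : ℝ)⁻¹ := by positivity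
  constructor
  · intro i
    rw [coeff_S]
    split_ifs <;> positivity
  · intro γ
    rw [coeff_S, coeff_S, one_mul]
    split_ifs with h1 h2 h2
    · exact pow_le_pow_of_le_one hl0 hl1 (Nat.le_succ γ)
    · omega
    · positivity
    · exact le_refl 0

theorem stmt9 (n : ℕ) (hn : 2 ≤ n) :
    ∀ γ : ℕ, Bcoeff n n (γ + 1) ≤ 2 * (n : ℝ) ^ 2 * Bcoeff n n γ := by
  intro γ
  have hgood : Good ((n : ℝ) * ((n : ℕ) + 2 : ℝ))
      (∏ l ∈ Finset.Icc 1 n,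
        (∑ j ∈ Finset.range (n + 1), (Polynomial.C ((l : ℝ)⁻¹) * Polynomial.X) ^ j) ^ (n + 2)) := by
    have hsum : (∑ _l ∈ Finset.Icc 1 n, ((n : ℝ) + 2)) = (n : ℝ) * ((n : ℕ) + 2 : ℝ) := by
      rw [Finset.sum_const, Nat.card_Icc, nsmul_eq_mul]
      push_cast
      ring
    rw [← hsum]
    exact good_prod (Finset.Icc 1 n)
      (fun l => (∑ j ∈ Finset.range (n + 1), (Polynomial.C ((l : ℝ)⁻¹) * Polynomial.X) ^ j) ^ (n + 2))
      (fun _ => ((n : ℕ) + 2 : ℝ))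
      (fun i _ => by positivity)
      (fun l hl => by
        have := good_pow (by norm_num) (good_S n l (Finset.mem_Icc.mp hl).1) (n + 2)
        have he : ((n + 2 : ℕ) : ℝ) * 1 = (n : ℝ) + 2 := by push_cast; ring
        rwa [he] at this)
  obtain ⟨hnn, hrat⟩ := hgood
  have h1 : Bcoeff n n (γ + 1) ≤ (n : ℝ) * ((n : ℕ) + 2 : ℝ) * Bcoeff n n γ := hrat γ
  have h2 : (n : ℝ) * ((n : ℕ) + 2 : ℝ) ≤ 2 * (n : ℝ) ^ 2 := by
    have : (2 : ℝ) ≤ (n : ℝ) := by exact_mod_cast hn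
    nlinarith
  have h3 : 0 ≤ Bcoeff n n γ := hnn γ
  calc Bcoeff n n (γ + 1) ≤ (n : ℝ) * ((n : ℕ) + 2 : ℝ) * Bcoeff n n γ := h1
    _ ≤ 2 * (n : ℝ) ^ 2 * Bcoeff n n γ := mul_le_mul_of_nonneg_right h2 h3
end

section
/- Let n ≥ 2 be an integer, and for 0 ≤ α ≤ n define C_α = Σ_{1 ≤ l_1 < ... < l_α ≤ n} 1/(l_1 ⋯ l_α) (with C_0 = 1), the elementary symmetric function e_α(1, 1/2, ..., 1/n). Then for all α with α + 1 ≤ n, one has C_α ≤ (3/2) n² · C_{α+1}. -/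
/-- `C α = e_α(1, 1/2, ..., 1/n)`, the elementary symmetric function. -/
noncomputable def Ccoeff (n α : ℕ) : ℝ :=
  ∑ s ∈ Finset.powersetCard α (Finset.Icc 1 n), ∏ l ∈ s, ((l : ℝ))⁻¹

lemma Ccoeff_nonneg (n α : ℕ) : 0 ≤ Ccoeff n α := by
  apply Finset.sum_nonneg
  intro s _
  exact Finset.prod_nonneg fun l _ => by positivity

lemma key_ineq (n α : ℕ) (hα : α + 1 ≤ n) :
    ((n : ℝ) - α) * Ccoeff n α ≤ ((α : ℝ) + 1) * n * Ccoeff n (α + 1) := by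
  set I := Finset.Icc 1 n with hI
  have hcardI : I.card = n := by simp [hI]
  have hinv : ∀ l ∈ I, (n : ℝ)⁻¹ ≤ (l : ℝ)⁻¹ := by
    intro l hl
    simp only [hI, Finset.mem_Icc] at hl
    have h1 : (0:ℝ) < l := by exact_mod_cast Nat.lt_of_lt_of_le Nat.zero_lt_one hl.1
    exact inv_anti₀ h1 (by exact_mod_cast hl.2)
  -- double counting
  have hS : ∑ s ∈ I.powersetCard α, ∑ l ∈ I \ s, ((∏ m ∈ s, (m:ℝ)⁻¹) * (l:ℝ)⁻¹)
      = ∑ t ∈ I.powersetCard (α+1), ∑ l ∈ t, ∏ m ∈ t, (m:ℝ)⁻¹ := by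
    rw [Finset.sum_sigma', Finset.sum_sigma']
    apply Finset.sum_nbij' (i := fun p => (⟨insert p.2 p.1, p.2⟩ : Σ _ : Finset ℕ, ℕ))
      (j := fun p => (⟨p.1.erase p.2, p.2⟩ : Σ _ : Finset ℕ, ℕ))
    · rintro ⟨s, l⟩ hp
      simp only [Finset.mem_sigma, Finset.mem_powersetCard, Finset.mem_sdiff] at hp ⊢
      obtain ⟨⟨hsub, hcard⟩, hlI, hls⟩ := hp
      refine ⟨⟨Finset.insert_subset hlI hsub, ?_⟩, Finset.mem_insert_self _ _⟩
      rw [Finset.card_insert_of_notMem hls, hcard]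
    · rintro ⟨t, l⟩ hp
      simp only [Finset.mem_sigma, Finset.mem_powersetCard, Finset.mem_sdiff] at hp ⊢
      obtain ⟨⟨hsub, hcard⟩, hlt⟩ := hp
      refine ⟨⟨(Finset.erase_subset _ _).trans hsub, ?_⟩, hsub hlt, Finset.notMem_erase _ _⟩
      simp [Finset.card_erase_of_mem hlt, hcard]
    · rintro ⟨s, l⟩ hp
      simp only [Finset.mem_sigma, Finset.mem_sdiff] at hp
      simp [Finset.erase_insert hp.2.2]
    · rintro ⟨t, l⟩ hp
      simp only [Finset.mem_sigma, Finset.mem_powersetCard] at hp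
      simp [Finset.insert_erase hp.2]
    · rintro ⟨s, l⟩ hp
      simp only [Finset.mem_sigma, Finset.mem_sdiff] at hp
      rw [Finset.prod_insert hp.2.2]
      ring
  -- RHS of hS equals (α+1) * Ccoeff n (α+1)
  have hRHS : ∑ t ∈ I.powersetCard (α+1), ∑ l ∈ t, ∏ m ∈ t, (m:ℝ)⁻¹
      = ((α : ℝ) + 1) * Ccoeff n (α+1) := by
    rw [Ccoeff, Finset.mul_sum]
    apply Finset.sum_congr rfl
    intro t ht
    rw [Finset.sum_const, (Finset.mem_powersetCard.mp ht).2]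
    push_cast
    ring
  -- lower bound each inner sum
  have hlb : ((n : ℝ) - α) * Ccoeff n α
      ≤ n * ∑ s ∈ I.powersetCard α, ∑ l ∈ I \ s, ((∏ m ∈ s, (m:ℝ)⁻¹) * (l:ℝ)⁻¹) := by
    rw [Ccoeff, Finset.mul_sum, Finset.mul_sum]
    apply Finset.sum_le_sum
    intro s hs
    obtain ⟨hsub, hcard⟩ := Finset.mem_powersetCard.mp hs
    have hprodnn : 0 ≤ ∏ m ∈ s, (m:ℝ)⁻¹ := Finset.prod_nonneg fun l _ => by positivity
    have hcardsd : (I \ s).card = n - α := by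
      rw [Finset.card_sdiff_of_subset hsub, hcardI, hcard]
    have h1 : ∑ l ∈ I \ s, ((∏ m ∈ s, (m:ℝ)⁻¹) * (l:ℝ)⁻¹)
        ≥ ∑ l ∈ I \ s, ((∏ m ∈ s, (m:ℝ)⁻¹) * (n:ℝ)⁻¹) := by
      apply Finset.sum_le_sum
      intro l hl
      exact mul_le_mul_of_nonneg_left (hinv l (Finset.mem_sdiff.mp hl).1) hprodnn
    have h2 : ∑ l ∈ I \ s, ((∏ m ∈ s, (m:ℝ)⁻¹) * (n:ℝ)⁻¹)
        = ((n : ℝ) - α) * (n:ℝ)⁻¹ * ∏ m ∈ s, (m:ℝ)⁻¹ := by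
      rw [Finset.sum_const, hcardsd]
      have : ((n - α : ℕ) : ℝ) = (n : ℝ) - α := by
        have := Nat.le_of_succ_le hα
        push_cast [this]; ring
      rw [nsmul_eq_mul, this]; ring
    have hn0 : (0:ℝ) < n := by
      have : 0 < n := by omega
      exact_mod_cast this
    have hnne : (n:ℝ) ≠ 0 := ne_of_gt hn0
    calc ((n : ℝ) - α) * ∏ m ∈ s, (m:ℝ)⁻¹
        = (n:ℝ) * (((n : ℝ) - α) * (n:ℝ)⁻¹ * ∏ m ∈ s, (m:ℝ)⁻¹) := by
          rw [show (n:ℝ)*(((n:ℝ)-α)*(n:ℝ)⁻¹*∏ m ∈ s, (m:ℝ)⁻¹)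
              = ((n:ℝ)*(n:ℝ)⁻¹)*(((n:ℝ)-α)*∏ m ∈ s, (m:ℝ)⁻¹) from by ring,
            mul_inv_cancel₀ hnne, one_mul]
      _ ≤ (n:ℝ) * ∑ l ∈ I \ s, ((∏ m ∈ s, (m:ℝ)⁻¹) * (l:ℝ)⁻¹) := by
          apply mul_le_mul_of_nonneg_left _ (le_of_lt hn0)
          rw [← h2]; exact h1
  calc ((n : ℝ) - α) * Ccoeff n α
      ≤ n * ∑ s ∈ I.powersetCard α, ∑ l ∈ I \ s, ((∏ m ∈ s, (m:ℝ)⁻¹) * (l:ℝ)⁻¹) := hlb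
    _ = ((α : ℝ) + 1) * n * Ccoeff n (α+1) := by rw [hS, hRHS]; ring

theorem stmt10 (n : ℕ) (hn : 2 ≤ n) :
    ∀ α : ℕ, α + 1 ≤ n → Ccoeff n α ≤ (3 / 2) * (n : ℝ) ^ 2 * Ccoeff n (α + 1) := by
  intro α hα
  have hkey := key_ineq n α hα
  have h0 := Ccoeff_nonneg n α
  have h1 := Ccoeff_nonneg n (α + 1)
  have hαn : (α : ℝ) + 1 ≤ n := by exact_mod_cast hα
  have hn2 : (2 : ℝ) ≤ n := by exact_mod_cast hn
  nlinarith [mul_nonneg h0 (sub_nonneg.mpr (by linarith : (1:ℝ) ≤ (n:ℝ) - α)),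
    mul_nonneg (mul_nonneg (by linarith : (0:ℝ) ≤ (n:ℝ)) h1) (by linarith : (0:ℝ) ≤ (n:ℝ) - ((α:ℝ)+1)),
    mul_nonneg (mul_nonneg (by positivity : (0:ℝ) ≤ (n:ℝ)^2) h1) (by norm_num : (0:ℝ) ≤ (1:ℝ)/2)]
end

section
/- Let k ≥ 1, n ≥ 0, and m ≥ 0 be integers. Then the number of k-tuples (l_1, ..., l_k) ∈ ℕ^k with l_1 + 2 l_2 + ... + k l_k = m is positive for every m ≥ 0 (since gcd(1,2,...,k) = 1), and more precisely it is asymptotic to m^{k-1} / ((k-1)! · k!) as m → ∞. -/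
open Filter Finset

def pc : ℕ → ℕ → ℕ
  | 0, 0 => 1
  | 0, _ + 1 => 0
  | (k + 1), m => ∑ j ∈ Finset.range (m / (k + 1) + 1), pc k (m - (k + 1) * j)

lemma pc_zero : ∀ m, pc 0 m = if m = 0 then 1 else 0
  | 0 => rfl
  | (_+1) => rfl

lemma pc_succ (k m : ℕ) :
    pc (k+1) m = ∑ j ∈ Finset.range (m / (k + 1) + 1), pc k (m - (k + 1) * j) := rfl

lemma sum_split {k : ℕ} (l : Fin (k+1) → ℕ) :
    ∑ i, (i.1 + 1) * l i = (∑ i : Fin k, (i.1 + 1) * Fin.init l i) + (k + 1) * l (Fin.last k) := by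
  rw [Fin.sum_univ_castSucc]
  simp [Fin.init]

lemma card_eq (k : ℕ) : ∀ m N : ℕ, m < N →
    (Finset.filter (fun l : Fin k → ℕ => ∑ i, (i.1 + 1) * l i = m)
      (Fintype.piFinset fun _ => Finset.range N)).card = pc k m := by
  induction k with
  | zero =>
    intro m N hN
    rw [pc_zero]
    rcases m with _ | m
    · rw [Finset.filter_true_of_mem (by simp)]
      simp
    · rw [Finset.filter_false_of_mem (by simp)]
      simp
  | succ k ih =>
    intro m N hN
    rw [pc_succ]
    rw [Finset.card_eq_sum_card_fiberwise
      (f := fun l : Fin (k+1) → ℕ => l (Fin.last k)) (t := Finset.range (m / (k + 1) + 1))]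
    · apply Finset.sum_congr rfl
      intro j hj
      rw [Finset.mem_range, Nat.lt_succ_iff] at hj
      have hjm : (k + 1) * j ≤ m := by
        calc (k+1) * j ≤ (k+1) * (m / (k+1)) := Nat.mul_le_mul_left _ hj
        _ ≤ m := Nat.mul_div_le _ _
      rw [← ih (m - (k+1)*j) N (lt_of_le_of_lt (Nat.sub_le _ _) hN)]
      apply Finset.card_bij (fun l _ => Fin.init l)
      · intro l hl
        simp only [Finset.mem_filter, Fintype.mem_piFinset] at hl ⊢
        obtain ⟨⟨h1, h2⟩, h3⟩ := hl
        refine ⟨fun i => h1 i.castSucc, ?_⟩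
        rw [sum_split l, h3] at h2
        omega
      · intro l hl l' hl' h
        simp only [Finset.mem_filter] at hl hl'
        funext i
        refine Fin.lastCases ?_ (fun i => congrFun h i) i
        rw [hl.2, hl'.2]
      · intro l' hl'
        simp only [Finset.mem_filter, Fintype.mem_piFinset, Finset.mem_range] at hl'
        obtain ⟨h1, h2⟩ := hl'
        refine ⟨Fin.snoc l' j, ?_, by simp [Fin.init_snoc]⟩
        simp only [Finset.mem_filter, Fintype.mem_piFinset, Finset.mem_range]
        have hs : ∀ i : Fin (k+1), (Fin.snoc l' j : Fin (k+1) → ℕ) i < N := by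
          intro i
          refine Fin.lastCases ?_ ?_ i
          · simpa using lt_of_le_of_lt (le_trans hj (Nat.div_le_self _ _)) hN
          · intro i; simpa using h1 i
        refine ⟨⟨hs, ?_⟩, by simp⟩
        rw [sum_split (Fin.snoc l' j)]
        simp only [Fin.snoc_last, Fin.init_snoc]
        omega
    · intro l hl
      rw [Finset.mem_coe, Finset.mem_filter] at hl
      rw [Finset.mem_coe, Finset.mem_range, Nat.lt_succ_iff]
      apply (Nat.le_div_iff_mul_le (by omega)).2
      calc (l (Fin.last k)) * (k+1) = (k+1) * l (Fin.last k) := by ring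
      _ ≤ ∑ i, (i.1 + 1) * l i := by
          have := Finset.single_le_sum (f := fun i : Fin (k+1) => (i.1+1) * l i)
            (fun i _ => Nat.zero_le _) (Finset.mem_univ (Fin.last k))
          simpa using this
      _ = m := hl.2

lemma pow_diff_bounds (d n : ℕ) :
    ((d:ℝ)+1) * (n:ℝ)^d ≤ ((n:ℝ)+1)^(d+1) - (n:ℝ)^(d+1) ∧
    ((n:ℝ)+1)^(d+1) - (n:ℝ)^(d+1) ≤ ((d:ℝ)+1) * ((n:ℝ)+1)^d := by
  have hid : ((n:ℝ)+1)^(d+1) - (n:ℝ)^(d+1)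
      = ∑ i ∈ range (d+1), ((n:ℝ)+1)^i * (n:ℝ)^(d - i) := by
    have := geom_sum₂_mul ((n:ℝ)+1) (n:ℝ) (d+1)
    simp only [add_sub_cancel_left, mul_one] at this
    rw [← this]
    exact Finset.sum_congr rfl fun i _ => by norm_num
  constructor
  · rw [hid]
    calc ((d:ℝ)+1) * (n:ℝ)^d = ∑ _i ∈ range (d+1), (n:ℝ)^d := by
          rw [Finset.sum_const, Finset.card_range]; push_cast; ring
    _ ≤ ∑ i ∈ range (d+1), ((n:ℝ)+1)^i * (n:ℝ)^(d-i) := by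
          apply Finset.sum_le_sum
          intro i hi
          rw [Finset.mem_range, Nat.lt_succ_iff] at hi
          calc (n:ℝ)^d = (n:ℝ)^i * (n:ℝ)^(d-i) := by
                rw [← pow_add]; congr 1; omega
          _ ≤ ((n:ℝ)+1)^i * (n:ℝ)^(d-i) := by
                apply mul_le_mul_of_nonneg_right _ (by positivity)
                exact pow_le_pow_left₀ (by positivity) (by linarith) i
  · rw [hid]
    calc ∑ i ∈ range (d+1), ((n:ℝ)+1)^i * (n:ℝ)^(d-i)
        ≤ ∑ _i ∈ range (d+1), ((n:ℝ)+1)^d := by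
          apply Finset.sum_le_sum
          intro i hi
          rw [Finset.mem_range, Nat.lt_succ_iff] at hi
          calc ((n:ℝ)+1)^i * (n:ℝ)^(d-i) ≤ ((n:ℝ)+1)^i * ((n:ℝ)+1)^(d-i) := by
                apply mul_le_mul_of_nonneg_left _ (by positivity)
                exact pow_le_pow_left₀ (by positivity) (by linarith) _
          _ = ((n:ℝ)+1)^d := by rw [← pow_add]; congr 1; omega
    _ = ((d:ℝ)+1) * ((n:ℝ)+1)^d := by
          rw [Finset.sum_const, Finset.card_range]; push_cast; ring

lemma sum_pow_bounds (d m : ℕ) :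
    (m:ℝ)^(d+1) / ((d:ℝ)+1) - (m:ℝ)^d ≤ ∑ n ∈ range m, (n:ℝ)^d ∧
    ∑ n ∈ range m, (n:ℝ)^d ≤ (m:ℝ)^(d+1) / ((d:ℝ)+1) := by
  have hd : (0:ℝ) < (d:ℝ)+1 := by positivity
  have htel : ∑ n ∈ range m, (((n:ℝ)+1)^(d+1) - (n:ℝ)^(d+1)) = (m:ℝ)^(d+1) := by
    have h := Finset.sum_range_sub (fun n : ℕ => ((n:ℝ))^(d+1)) m
    have he : ∀ n : ℕ, ((n:ℝ)+1)^(d+1) - (n:ℝ)^(d+1)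
        = (fun n : ℕ => ((n:ℝ))^(d+1)) (n+1) - (fun n : ℕ => ((n:ℝ))^(d+1)) n := by
      intro n; push_cast; ring
    rw [Finset.sum_congr rfl (fun n _ => he n), h]
    simp [zero_pow (by omega : d+1 ≠ 0)]
  have hupper : ∑ n ∈ range m, ((n:ℝ)+1)^d ≤ (∑ n ∈ range m, (n:ℝ)^d) + (m:ℝ)^d := by
    have h := Finset.sum_range_succ' (fun n : ℕ => ((n:ℝ))^d) m
    have he : ∑ n ∈ range m, ((n:ℝ)+1)^d = ∑ n ∈ range m, (fun n : ℕ => ((n:ℝ))^d) (n+1) := by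
      apply Finset.sum_congr rfl; intro n _; push_cast; ring_nf
    have h2 := Finset.sum_range_succ (fun n : ℕ => ((n:ℝ))^d) m
    have h0 : (0:ℝ) ≤ (0:ℝ)^d := by positivity
    simp only at h h2 he ⊢
    rw [he]
    push_cast at h h2 ⊢
    linarith
  constructor
  · rw [sub_le_iff_le_add, div_le_iff₀ hd]
    calc (m:ℝ)^(d+1)
        = ∑ n ∈ range m, (((n:ℝ)+1)^(d+1) - (n:ℝ)^(d+1)) := htel.symm
    _ ≤ ∑ n ∈ range m, (((d:ℝ)+1) * ((n:ℝ)+1)^d) :=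
          Finset.sum_le_sum (fun n _ => (pow_diff_bounds d n).2)
    _ = ((d:ℝ)+1) * ∑ n ∈ range m, ((n:ℝ)+1)^d := by rw [Finset.mul_sum]
    _ ≤ ((d:ℝ)+1) * ((∑ n ∈ range m, (n:ℝ)^d) + (m:ℝ)^d) := by
          apply mul_le_mul_of_nonneg_left hupper hd.le
    _ = ((∑ n ∈ range m, (n:ℝ)^d) + (m:ℝ)^d) * ((d:ℝ)+1) := by ring
  · rw [le_div_iff₀ hd]
    calc (∑ n ∈ range m, (n:ℝ)^d) * ((d:ℝ)+1) = ∑ n ∈ range m, ((d:ℝ)+1) * (n:ℝ)^d := by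
          rw [Finset.sum_mul]; apply Finset.sum_congr rfl; intros; ring
    _ ≤ ∑ n ∈ range m, (((n:ℝ)+1)^(d+1) - (n:ℝ)^(d+1)) :=
          Finset.sum_le_sum (fun n _ => (pow_diff_bounds d n).1)
    _ = (m:ℝ)^(d+1) := htel

lemma tendsto_sum_pow_div (d : ℕ) :
    Tendsto (fun m : ℕ => (∑ n ∈ range m, (n:ℝ)^d) / (m:ℝ)^(d+1)) atTop
      (nhds (1/((d:ℝ)+1))) := by
  have hd : (0:ℝ) < (d:ℝ)+1 := by positivity
  apply tendsto_of_tendsto_of_tendsto_of_le_of_le'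
    (g := fun m : ℕ => 1/((d:ℝ)+1) - 1/(m:ℝ)) (h := fun _ : ℕ => 1/((d:ℝ)+1))
  · have := tendsto_one_div_atTop_nhds_zero_nat (𝕜 := ℝ)
    simpa using tendsto_const_nhds.sub this
  · exact tendsto_const_nhds
  · filter_upwards [eventually_ge_atTop 1] with m hm
    have hm' : (0:ℝ) < (m:ℝ) := by exact_mod_cast hm
    have hp : (0:ℝ) < (m:ℝ)^(d+1) := by positivity
    rw [le_div_iff₀ hp]
    have := (sum_pow_bounds d m).1
    have hexp : (1/((d:ℝ)+1) - 1/(m:ℝ)) * (m:ℝ)^(d+1)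
        = (m:ℝ)^(d+1)/((d:ℝ)+1) - (m:ℝ)^d := by
      field_simp
      ring
    linarith [hexp ▸ this]
  · filter_upwards [eventually_ge_atTop 1] with m hm
    have hm' : (0:ℝ) < (m:ℝ) := by exact_mod_cast hm
    have hp : (0:ℝ) < (m:ℝ)^(d+1) := by positivity
    rw [div_le_iff₀ hp]
    have := (sum_pow_bounds d m).2
    have hexp : 1/((d:ℝ)+1) * (m:ℝ)^(d+1) = (m:ℝ)^(d+1)/((d:ℝ)+1) := by ring
    linarith [hexp ▸ this]

lemma tendsto_weighted (d : ℕ) {u : ℕ → ℝ} {L : ℝ} (hu : Tendsto u atTop (nhds L)) :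
    Tendsto (fun m : ℕ => (∑ n ∈ range m, u n * (n:ℝ)^d) / (m:ℝ)^(d+1)) atTop
      (nhds (L/((d:ℝ)+1))) := by
  have habs : Tendsto (fun n : ℕ => |u n - L|) atTop (nhds 0) := by
    have := (hu.sub_const L).abs
    simpa using this
  have hces : Tendsto (fun m : ℕ => (∑ n ∈ range m, |u n - L|) / (m:ℝ)) atTop (nhds 0) := by
    have := habs.cesaro
    simpa [div_eq_inv_mul] using this
  have h1 : Tendsto (fun m : ℕ => (∑ n ∈ range m, (u n - L) * (n:ℝ)^d) / (m:ℝ)^(d+1))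
      atTop (nhds 0) := by
    apply squeeze_zero_norm' _ hces
    filter_upwards [eventually_ge_atTop 1] with m hm
    have hm' : (0:ℝ) < (m:ℝ) := by exact_mod_cast hm
    have hp : (0:ℝ) < (m:ℝ)^(d+1) := by positivity
    rw [Real.norm_eq_abs, abs_div, abs_of_pos hp, div_le_div_iff₀ hp hm']
    calc |∑ n ∈ range m, (u n - L) * (n:ℝ)^d| * (m:ℝ)
        ≤ (∑ n ∈ range m, |u n - L| * (m:ℝ)^d) * (m:ℝ) := by
          apply mul_le_mul_of_nonneg_right _ hm'.le
          refine le_trans (Finset.abs_sum_le_sum_abs _ _) ?_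
          apply Finset.sum_le_sum
          intro n hn
          rw [Finset.mem_range] at hn
          rw [abs_mul, abs_pow, Nat.abs_cast]
          apply mul_le_mul_of_nonneg_left _ (abs_nonneg _)
          exact pow_le_pow_left₀ (by positivity) (by exact_mod_cast hn.le) d
    _ = (∑ n ∈ range m, |u n - L|) * (m:ℝ)^(d+1) := by
          rw [← Finset.sum_mul]
          ring
  have h2 : Tendsto (fun m : ℕ => L * ((∑ n ∈ range m, (n:ℝ)^d) / (m:ℝ)^(d+1)))
      atTop (nhds (L * (1/((d:ℝ)+1)))) := tendsto_const_nhds.mul (tendsto_sum_pow_div d)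
  have key := h2.add h1
  rw [add_zero, mul_one_div] at key
  apply key.congr
  intro m
  have : ∑ n ∈ range m, u n * (n:ℝ)^d
      = L * (∑ n ∈ range m, (n:ℝ)^d) + ∑ n ∈ range m, (u n - L) * (n:ℝ)^d := by
    rw [Finset.mul_sum, ← Finset.sum_add_distrib]
    apply Finset.sum_congr rfl
    intros; ring
  rw [this, add_div, mul_div_assoc]

lemma tendsto_sum_div (a : ℕ → ℕ) (d : ℕ) {L : ℝ}
    (h : Tendsto (fun m : ℕ => (a m : ℝ)/(m:ℝ)^d) atTop (nhds L)) :
    Tendsto (fun m : ℕ => (∑ n ∈ range m, (a n : ℝ)) / (m:ℝ)^(d+1)) atTop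
      (nhds (L/((d:ℝ)+1))) := by
  set u : ℕ → ℝ := fun m => (a m : ℝ)/(m:ℝ)^d with hu
  set c : ℝ := (a 0 : ℝ) - u 0 * (0:ℝ)^d with hc
  have hw := tendsto_weighted d h
  have hzero : Tendsto (fun m : ℕ => c / (m:ℝ)^(d+1)) atTop (nhds 0) := by
    have hpow : Tendsto (fun m : ℕ => (m:ℝ)^(d+1)) atTop atTop :=
      (tendsto_pow_atTop (by omega)).comp tendsto_natCast_atTop_atTop
    simpa [div_eq_mul_inv] using tendsto_const_nhds.mul hpow.inv_tendsto_atTop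
  have key := hw.add hzero
  rw [add_zero] at key
  apply key.congr'
  filter_upwards [eventually_ge_atTop 1] with m hm
  have heq : ∑ n ∈ range m, (a n : ℝ) = (∑ n ∈ range m, u n * (n:ℝ)^d) + c := by
    have hsingle : ∑ n ∈ range m, ((a n : ℝ) - u n * (n:ℝ)^d) = c := by
      rw [Finset.sum_eq_single_of_mem 0 (Finset.mem_range.2 (by omega))]
      · simp [hc]
      · intro n _ hn
        have hnp : (0:ℝ) < (n:ℝ)^d := by
          have : 0 < n := Nat.pos_of_ne_zero hn
          positivity
        rw [hu]
        simp only
        rw [div_mul_cancel₀ _ hnp.ne']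
        ring
    have := Finset.sum_sub_distrib (f := fun n => (a n : ℝ)) (g := fun n => u n * (n:ℝ)^d)
      (s := range m)
    rw [this] at hsingle
    linarith
  rw [heq, add_div]

lemma le_block (a : ℕ → ℕ) (mono : Monotone a) (q m : ℕ) (hq : 1 ≤ q) :
    ∑ n ∈ range (m+1), a n ≤ q * ∑ j ∈ range (m / q + 1), a (m - q*j) := by
  have hq0 : 0 < q := hq
  calc ∑ n ∈ range (m+1), a n ≤ ∑ n ∈ range (m+1), a (m - q*((m-n)/q)) := by
        apply Finset.sum_le_sum
        intro n hn
        rw [Finset.mem_range, Nat.lt_succ_iff] at hn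
        apply mono
        have h1 : q*((m-n)/q) ≤ m - n := by
          rw [mul_comm]; exact Nat.div_mul_le_self _ _
        omega
  _ = ∑ p ∈ (range (m+1)).image (fun n => ((m-n)/q, (m-n)%q)), a (m - q*p.1) := by
        rw [Finset.sum_image]
        intro n hn n' hn' h
        rw [Finset.mem_coe, Finset.mem_range, Nat.lt_succ_iff] at hn hn'
        rw [Prod.mk.injEq] at h
        have e1 := Nat.div_add_mod (m-n) q
        have e2 := Nat.div_add_mod (m-n') q
        rw [h.1, h.2] at e1
        omega
  _ ≤ ∑ p ∈ range (m/q + 1) ×ˢ range q, a (m - q*p.1) := by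
        apply Finset.sum_le_sum_of_subset
        intro p hp
        rw [Finset.mem_image] at hp
        obtain ⟨n, hn, rfl⟩ := hp
        rw [Finset.mem_product, Finset.mem_range, Finset.mem_range, Nat.lt_succ_iff]
        exact ⟨Nat.div_le_div_right (Nat.sub_le _ _), Nat.mod_lt _ hq0⟩
  _ = q * ∑ j ∈ range (m / q + 1), a (m - q*j) := by
        rw [Finset.sum_product]
        simp [Finset.mul_sum, mul_comm]

lemma block_le (a : ℕ → ℕ) (mono : Monotone a) (q m : ℕ) (hq : 1 ≤ q) :
    q * ∑ j ∈ range (m / q + 1), a (m - q*j) ≤ ∑ n ∈ range (m+q), a n := by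
  have hq0 : 0 < q := hq
  have hmul : ∀ j ∈ range (m/q+1), q * j ≤ m := by
    intro j hj
    rw [Finset.mem_range, Nat.lt_succ_iff] at hj
    calc q * j ≤ q * (m/q) := Nat.mul_le_mul_left _ hj
    _ ≤ m := Nat.mul_div_le _ _
  calc q * ∑ j ∈ range (m / q + 1), a (m - q*j)
      = ∑ p ∈ range (m/q + 1) ×ˢ range q, a (m - q*p.1) := by
        rw [Finset.sum_product]
        simp [Finset.mul_sum, mul_comm]
  _ ≤ ∑ p ∈ range (m/q + 1) ×ˢ range q, a (m - q*p.1 + p.2) := by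
        apply Finset.sum_le_sum
        intro p _
        exact mono (Nat.le_add_right _ _)
  _ = ∑ n ∈ (range (m/q + 1) ×ˢ range q).image (fun p => m - q*p.1 + p.2), a n := by
        rw [Finset.sum_image]
        intro p hp p' hp' h
        rw [Finset.mem_coe, Finset.mem_product, Finset.mem_range, Finset.mem_range] at hp hp'
        have h1 : q * p.1 ≤ m := hmul p.1 (Finset.mem_range.2 hp.1)
        have h2 : q * p'.1 ≤ m := hmul p'.1 (Finset.mem_range.2 hp'.1)
        have key : q * p'.1 + p.2 = q * p.1 + p'.2 := by simp only at h; omega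
        have hj : p'.1 = p.1 := by
          have d1 : (q * p'.1 + p.2) / q = p'.1 := by
            rw [Nat.mul_add_div hq0, Nat.div_eq_of_lt hp.2, add_zero]
          have d2 : (q * p.1 + p'.2) / q = p.1 := by
            rw [Nat.mul_add_div hq0, Nat.div_eq_of_lt hp'.2, add_zero]
          rw [← d1, key, d2]
        have hi : p.2 = p'.2 := by
          rw [hj] at key; omega
        exact Prod.ext hj.symm hi
  _ ≤ ∑ n ∈ range (m+q), a n := by
        apply Finset.sum_le_sum_of_subset
        intro n hn
        rw [Finset.mem_image] at hn
        obtain ⟨p, hp, rfl⟩ := hn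
        rw [Finset.mem_product, Finset.mem_range, Finset.mem_range] at hp
        rw [Finset.mem_range]
        have := hmul p.1 (Finset.mem_range.2 hp.1)
        omega

lemma tendsto_shift (a : ℕ → ℕ) (d c : ℕ) {L : ℝ}
    (h : Tendsto (fun m : ℕ => (a m : ℝ)/(m:ℝ)^d) atTop (nhds L)) :
    Tendsto (fun m : ℕ => (∑ n ∈ range (m+c), (a n : ℝ)) / (m:ℝ)^(d+1)) atTop
      (nhds (L/((d:ℝ)+1))) := by
  have h1 := (tendsto_sum_div a d h).comp (tendsto_add_atTop_nat c)
  have h2 : Tendsto (fun m : ℕ => (((m:ℝ)+(c:ℝ))/(m:ℝ))^(d+1)) atTop (nhds 1) := by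
    have hb : Tendsto (fun m : ℕ => ((m:ℝ)+(c:ℝ))/(m:ℝ)) atTop (nhds 1) := by
      have hc : Tendsto (fun m : ℕ => (c:ℝ)/(m:ℝ)) atTop (nhds 0) := by
        simpa [div_eq_mul_inv] using tendsto_const_nhds.mul (tendsto_one_div_atTop_nhds_zero_nat (𝕜 := ℝ))
      have := tendsto_const_nhds (x := (1:ℝ)) (f := atTop (α := ℕ)) |>.add hc
      rw [add_zero] at this
      apply this.congr'
      filter_upwards [eventually_ge_atTop 1] with m hm
      have hm' : (m:ℝ) ≠ 0 := by positivity
      field_simp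
    have := hb.pow (d+1)
    simpa using this
  have key := h1.mul h2
  rw [mul_one] at key
  apply key.congr'
  filter_upwards [eventually_ge_atTop 1] with m hm
  have hm' : (m:ℝ) ≠ 0 := by positivity
  have hmc : (m:ℝ)+(c:ℝ) ≠ 0 := by positivity
  simp only [Function.comp_apply]
  push_cast
  field_simp
  rw [div_pow, mul_assoc, div_mul_cancel₀ _ (pow_ne_zero _ hm')]

lemma tendsto_block (a : ℕ → ℕ) (ha : Monotone a) (d q : ℕ) (hq : 1 ≤ q) {L : ℝ}
    (h : Tendsto (fun m : ℕ => (a m : ℝ)/(m:ℝ)^d) atTop (nhds L)) :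
    Tendsto (fun m : ℕ => (∑ j ∈ range (m/q + 1), (a (m - q*j) : ℝ)) / (m:ℝ)^(d+1)) atTop
      (nhds (L/((q:ℝ)*((d:ℝ)+1)))) := by
  have hq' : (q:ℝ) ≠ 0 := by positivity
  have hmid : Tendsto
      (fun m : ℕ => (q:ℝ) * ((∑ j ∈ range (m/q + 1), (a (m - q*j) : ℝ)) / (m:ℝ)^(d+1)))
      atTop (nhds (L/((d:ℝ)+1))) := by
    apply tendsto_of_tendsto_of_tendsto_of_le_of_le'
      (tendsto_shift a d 1 h) (tendsto_shift a d q h)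
    · filter_upwards [eventually_ge_atTop 1] with m hm
      have hp : (0:ℝ) < (m:ℝ)^(d+1) := by
        have : (0:ℝ) < (m:ℝ) := by exact_mod_cast hm
        positivity
      rw [mul_div_assoc']
      gcongr
      exact_mod_cast le_block a ha q m hq
    · filter_upwards [eventually_ge_atTop 1] with m hm
      have hp : (0:ℝ) < (m:ℝ)^(d+1) := by
        have : (0:ℝ) < (m:ℝ) := by exact_mod_cast hm
        positivity
      rw [mul_div_assoc']
      gcongr
      exact_mod_cast block_le a ha q m hq
  have := hmid.const_mul ((q:ℝ)⁻¹)
  rw [inv_mul_eq_div, div_div, mul_comm ((d:ℝ)+1) (q:ℝ)] at this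
  exact this.congr fun m => inv_mul_cancel_left₀ hq' _

lemma pc_one (m : ℕ) : pc 1 m = 1 := by
  rw [pc_succ]
  have : ∀ j ∈ range (m / 1 + 1), pc 0 (m - 1*j) = if j = m then 1 else 0 := by
    intro j hj
    rw [Finset.mem_range, Nat.lt_succ_iff, Nat.div_one] at hj
    rw [pc_zero]
    congr 1
    simp only [eq_iff_iff, one_mul]
    omega
  rw [Finset.sum_congr rfl this, Finset.sum_ite_eq' (range (m/1+1)) m (fun _ => 1)]
  simp [Nat.div_one]

lemma pc_mono (k : ℕ) : Monotone (pc (k+1)) := by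
  induction k with
  | zero => intro x y _; simp [pc_one]
  | succ k ih =>
    apply monotone_nat_of_le_succ
    intro m
    rw [pc_succ, pc_succ]
    calc ∑ j ∈ range (m / (k+2) + 1), pc (k+1) (m - (k+2)*j)
        ≤ ∑ j ∈ range (m / (k+2) + 1), pc (k+1) (m+1 - (k+2)*j) :=
          Finset.sum_le_sum fun j _ => ih (by omega)
    _ ≤ ∑ j ∈ range ((m+1) / (k+2) + 1), pc (k+1) (m+1 - (k+2)*j) := by
          apply Finset.sum_le_sum_of_subset
          apply Finset.range_subset_range.2
          have := Nat.div_le_div_right (c := k+2) (show m ≤ m+1 by omega)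
          exact Nat.add_le_add_right this 1

lemma pc_pos (k : ℕ) : ∀ m, 0 < pc (k+1) m := by
  induction k with
  | zero => intro m; simp [pc_one]
  | succ k ih =>
    intro m
    rw [pc_succ]
    have h0 : pc (k+1) (m - (k+2)*0) ≤ ∑ j ∈ range (m / (k+2) + 1), pc (k+1) (m - (k+2)*j) :=
      Finset.single_le_sum (f := fun j => pc (k+1) (m - (k+2)*j))
        (fun i _ => Nat.zero_le _) (Finset.mem_range.2 (Nat.succ_pos _))
    exact lt_of_lt_of_le (ih (m - (k+2)*0)) h0

lemma pc_tendsto (K : ℕ) :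
    Tendsto (fun m : ℕ => (pc (K+1) m : ℝ)/(m:ℝ)^K) atTop
      (nhds (1/((K.factorial : ℝ) * ((K+1).factorial : ℝ)))) := by
  induction K with
  | zero =>
    have : (fun m : ℕ => (pc 1 m : ℝ)/(m:ℝ)^0) = fun _ => 1 := by
      funext m; simp [pc_one]
    rw [this]
    norm_num [Nat.factorial]
  | succ K ih =>
    have hb := tendsto_block (pc (K+1)) (pc_mono K) K (K+2) (by omega) ih
    have heq : (fun m : ℕ => (pc (K+2) m : ℝ)/(m:ℝ)^(K+1))
        = fun m : ℕ => (∑ j ∈ range (m/(K+2) + 1), (pc (K+1) (m - (K+2)*j) : ℝ)) / (m:ℝ)^(K+1) := by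
      funext m
      rw [pc_succ]
      push_cast
      ring
    rw [heq]
    convert hb using 2
    have h1 : ((K+1).factorial : ℝ) = ((K:ℝ)+1) * (K.factorial : ℝ) := by
      rw [Nat.factorial_succ]; push_cast; ring
    have h2 : ((K+2).factorial : ℝ) = ((K:ℝ)+2) * ((K+1).factorial : ℝ) := by
      have : (K+2).factorial = (K+2) * (K+1).factorial := Nat.factorial_succ (K+1)
      rw [this]; push_cast; ring
    have hK : (K.factorial : ℝ) ≠ 0 := by positivity
    have hK1 : ((K+1).factorial : ℝ) ≠ 0 := by positivity
    push_cast [h1, h2]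
    field_simp

theorem stmt12 (k : ℕ) (hk : 1 ≤ k) :
    (∀ m : ℕ, 0 < (Finset.filter (fun l : Fin k → ℕ => ∑ i, (i.1 + 1) * l i = m)
        (Fintype.piFinset fun _ => Finset.range (m + 1))).card) ∧
    Tendsto (fun m : ℕ =>
        ((Finset.filter (fun l : Fin k → ℕ => ∑ i, (i.1 + 1) * l i = m)
            (Fintype.piFinset fun _ => Finset.range (m + 1))).card : ℝ)
        / ((m : ℝ) ^ (k - 1) / ((Nat.factorial (k - 1) : ℝ) * (Nat.factorial k : ℝ))))
      atTop (nhds 1) := by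
  obtain ⟨K, rfl⟩ : ∃ K, k = K + 1 := ⟨k - 1, by omega⟩
  constructor
  · intro m
    rw [card_eq (K+1) m (m+1) (by omega)]
    exact pc_pos K m
  · have hc : ∀ m : ℕ, ((Finset.filter (fun l : Fin (K+1) → ℕ => ∑ i, (i.1 + 1) * l i = m)
        (Fintype.piFinset fun _ => Finset.range (m + 1))).card : ℝ) = (pc (K+1) m : ℝ) := by
      intro m
      rw [card_eq (K+1) m (m+1) (by omega)]
    set c : ℝ := ((K.factorial : ℝ) * ((K+1).factorial : ℝ)) with hcdef
    have hcpos : (0:ℝ) < c := by positivity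
    have h := (pc_tendsto K).const_mul c
    rw [mul_one_div, div_self hcpos.ne'] at h
    apply h.congr'
    filter_upwards [eventually_ge_atTop 1] with m hm
    have hm' : (m:ℝ) ≠ 0 := by positivity
    have hpow : (m:ℝ)^K ≠ 0 := by positivity
    simp only [Nat.add_sub_cancel]
    rw [hc m]
    field_simp
    ring
end

section
/- Let a, b be positive integers and α_1, α_2 real numbers, n ≥ 0. Then as m → ∞ along multiples of gcd(a,b), Σ_{a l_1 + b l_2 = m, l_1,l_2 ≥ 0} (α_1 l_1 + α_2 l_2)^n / n! = (gcd(a,b)/(a b)) · (Σ_{p=0}^{n} (α_1/a)^p (α_2/b)^{n−p}) · m^{n+1}/(n+1)! + o(m^{n+1}). -/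
open Filter
open Finset

lemma sum_pow_err (j : ℕ) : ∀ K : ℕ, |(∑ k ∈ range K, (k:ℝ)^j) - (K:ℝ)^(j+1)/(j+1)| ≤ (K:ℝ)^j := by
  intro K
  induction K with
  | zero => simp
  | succ K ih =>
    rw [sum_range_succ]
    have hgeom := geom_sum₂_mul ((K:ℝ)+1) (K:ℝ) (j+1)
    simp only [add_sub_cancel_left, mul_one] at hgeom
    have hterm : ∀ i ∈ range (j+1), (K:ℝ)^j ≤ ((K:ℝ)+1)^i * (K:ℝ)^(j+1-1-i) ∧
        ((K:ℝ)+1)^i * (K:ℝ)^(j+1-1-i) ≤ ((K:ℝ)+1)^j := by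
      intro i hi
      rw [mem_range] at hi
      have hij : i ≤ j := Nat.lt_succ_iff.mp hi
      have h0 : (0:ℝ) ≤ (K:ℝ) := Nat.cast_nonneg K
      constructor
      · calc (K:ℝ)^j = (K:ℝ)^i * (K:ℝ)^(j-i) := by
              rw [← pow_add]; congr 1; omega
          _ ≤ ((K:ℝ)+1)^i * (K:ℝ)^(j+1-1-i) := by
              have : j + 1 - 1 - i = j - i := by omega
              rw [this]
              gcongr
              linarith
      · calc ((K:ℝ)+1)^i * (K:ℝ)^(j+1-1-i) ≤ ((K:ℝ)+1)^i * ((K:ℝ)+1)^(j-i) := by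
              have : j + 1 - 1 - i = j - i := by omega
              rw [this]; gcongr <;> linarith
          _ = ((K:ℝ)+1)^j := by rw [← pow_add]; congr 1; omega
    have hlow : (j+1:ℝ) * (K:ℝ)^j ≤ ((K:ℝ)+1)^(j+1) - (K:ℝ)^(j+1) := by
      rw [← hgeom]
      calc (j+1:ℝ) * (K:ℝ)^j = ∑ _i ∈ range (j+1), (K:ℝ)^j := by
            rw [sum_const, card_range]; push_cast; ring
        _ ≤ _ := sum_le_sum fun i hi => (hterm i hi).1
    have hhigh : ((K:ℝ)+1)^(j+1) - (K:ℝ)^(j+1) ≤ (j+1:ℝ) * ((K:ℝ)+1)^j := by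
      rw [← hgeom]
      calc _ ≤ ∑ _i ∈ range (j+1), ((K:ℝ)+1)^j := sum_le_sum fun i hi => (hterm i hi).2
        _ = (j+1:ℝ) * ((K:ℝ)+1)^j := by rw [sum_const, card_range]; push_cast; ring
    have hj : (0:ℝ) < (j:ℝ) + 1 := by positivity
    rw [abs_le] at ih ⊢
    push_cast
    have e1 : (K:ℝ)^j ≤ ((K:ℝ)+1)^(j+1)/((j:ℝ)+1) - (K:ℝ)^(j+1)/((j:ℝ)+1) := by
      rw [← sub_div, le_div_iff₀ hj]; linarith
    have e2 : ((K:ℝ)+1)^(j+1)/((j:ℝ)+1) - (K:ℝ)^(j+1)/((j:ℝ)+1) ≤ ((K:ℝ)+1)^j := by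
      rw [← sub_div, div_le_iff₀ hj]; linarith
    constructor
    · linarith [ih.1, ih.2]
    · linarith [ih.1, ih.2]

lemma key_tendsto (j : ℕ) (N : ℕ → ℕ) (c : ℝ) (F : Filter ℕ) (hF : F ≤ atTop)
    (hN : Tendsto (fun m => (N m : ℝ)/(m:ℝ)) F (nhds c)) :
    Tendsto (fun m => (∑ k ∈ range (N m), (k:ℝ)^j)/(m:ℝ)^(j+1)) F
      (nhds (c^(j+1)/((j:ℝ)+1))) := by
  have h1 : Tendsto (fun m => ((N m:ℝ)/(m:ℝ))^(j+1)/((j:ℝ)+1)) F (nhds (c^(j+1)/((j:ℝ)+1))) :=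
    (hN.pow (j+1)).div_const _
  have h2 : Tendsto (fun m => ((∑ k ∈ range (N m), (k:ℝ)^j) - (N m:ℝ)^(j+1)/((j:ℝ)+1))/(m:ℝ)^(j+1))
      F (nhds 0) := by
    refine squeeze_zero_norm' (a := fun m => ((N m:ℝ)/m)^j * (1/(m:ℝ))) ?_ ?_
    · filter_upwards [hF (eventually_ge_atTop 1)] with m hm
      have hm0 : (0:ℝ) < (m:ℝ) := by exact_mod_cast hm
      have hp : (0:ℝ) < (m:ℝ)^(j+1) := by positivity
      rw [Real.norm_eq_abs, abs_div, abs_of_pos hp, div_le_iff₀ hp]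
      calc |(∑ k ∈ range (N m), (k:ℝ)^j) - (N m:ℝ)^(j+1)/((j:ℝ)+1)| ≤ (N m:ℝ)^j :=
            sum_pow_err j (N m)
        _ = (N m:ℝ)^j * (((m:ℝ)^j)/((m:ℝ)^j)) * ((m:ℝ)/(m:ℝ)) := by
              rw [div_self (by positivity : ((m:ℝ)^j) ≠ 0), div_self (ne_of_gt hm0)]; ring
        _ = ((N m:ℝ)/m)^j * (1/m) * (m:ℝ)^(j+1) := by rw [div_pow, pow_succ]; ring
    · have := (hN.pow j).mul (tendsto_one_div_atTop_nhds_zero_nat.mono_left hF)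
      simpa using this
  have h3 := h1.add h2
  rw [add_zero] at h3
  refine h3.congr' ?_
  filter_upwards [hF (eventually_ge_atTop 1)] with m hm
  have hm0 : (m:ℝ) ≠ 0 := by
    have : (0:ℝ) < (m:ℝ) := by exact_mod_cast hm
    linarith
  rw [div_pow]
  field_simp
  ring

lemma choose_identity (v w : ℝ) : ∀ n : ℕ,
    ∑ j ∈ range (n+1), ((n+1).choose (j+1) : ℝ) * v^j * w^(n-j)
      = ∑ p ∈ range (n+1), (v+w)^p * w^(n-p) := by
  intro n
  induction n with
  | zero => simp
  | succ n ih =>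
    have hR : ∑ p ∈ range (n+2), (v+w)^p * w^(n+1-p)
        = w * (∑ p ∈ range (n+1), (v+w)^p * w^(n-p)) + (v+w)^(n+1) := by
      rw [sum_range_succ, mul_sum]
      congr 1
      · apply sum_congr rfl
        intro p hp
        rw [mem_range] at hp
        have h : n + 1 - p = (n - p) + 1 := by omega
        rw [h, pow_succ]; ring
      · simp
    have hA : ∑ j ∈ range (n+2), ((n+1).choose j : ℝ) * v^j * w^(n+1-j) = (v+w)^(n+1) := by
      rw [add_pow]
      exact sum_congr rfl fun j hj => by ring
    have hB : ∑ j ∈ range (n+2), ((n+1).choose (j+1) : ℝ) * v^j * w^(n+1-j)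
        = w * ∑ j ∈ range (n+1), ((n+1).choose (j+1) : ℝ) * v^j * w^(n-j) := by
      rw [sum_range_succ]
      have hz : (n+1).choose (n+2) = 0 := Nat.choose_eq_zero_of_lt (by omega)
      rw [hz, mul_sum]
      push_cast
      rw [zero_mul, zero_mul, add_zero]
      apply sum_congr rfl
      intro j hj
      rw [mem_range] at hj
      have h : n + 1 - j = (n - j) + 1 := by omega
      rw [h, pow_succ]; ring
    calc ∑ j ∈ range (n+2), ((n+2).choose (j+1) : ℝ) * v^j * w^(n+1-j)
        = ∑ j ∈ range (n+2), (((n+1).choose j : ℝ) * v^j * w^(n+1-j)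
            + ((n+1).choose (j+1) : ℝ) * v^j * w^(n+1-j)) := by
          apply sum_congr rfl
          intro j hj
          rw [Nat.choose_succ_succ (n+1) j]
          push_cast; ring
      _ = (v+w)^(n+1) + w * ∑ j ∈ range (n+1), ((n+1).choose (j+1) : ℝ) * v^j * w^(n-j) := by
          rw [sum_add_distrib, hA, hB]
      _ = ∑ p ∈ range (n+2), (v+w)^p * w^(n+1-p) := by rw [hR, ih]; ring

noncomputable def x0 (a b m : ℕ) : ℕ :=
  ((((m / Nat.gcd a b : ℕ) : ℤ) * Nat.gcdA a b) % (((b / Nat.gcd a b : ℕ) : ℤ))).toNat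

noncomputable def Kf (a b m : ℕ) : ℕ := (m / a - x0 a b m) / (b / Nat.gcd a b)

lemma x0_lt (a b : ℕ) (hb : 0 < b) (m : ℕ) : x0 a b m < b / Nat.gcd a b := by
  have hg : 0 < Nat.gcd a b := Nat.gcd_pos_of_pos_right a hb
  have hb' : 0 < b / Nat.gcd a b := Nat.div_pos (Nat.le_of_dvd hb (Nat.gcd_dvd_right a b)) hg
  have h := Int.emod_lt_of_pos (((m / Nat.gcd a b : ℕ) : ℤ) * Nat.gcdA a b)
      (by exact_mod_cast hb' : (0:ℤ) < ((b / Nat.gcd a b : ℕ) : ℤ))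
  unfold x0
  omega

lemma x0_dvd (a b : ℕ) (ha : 0 < a) (hb : 0 < b) (m : ℕ) (hm : Nat.gcd a b ∣ m) :
    (b:ℤ) ∣ (m:ℤ) - (a:ℤ) * (x0 a b m : ℤ) := by
  have hgpos : 0 < Nat.gcd a b := Nat.gcd_pos_of_pos_right a hb
  have hb'pos : 0 < b / Nat.gcd a b :=
    Nat.div_pos (Nat.le_of_dvd hb (Nat.gcd_dvd_right a b)) hgpos
  have hx0 : (x0 a b m : ℤ)
      = (((m / Nat.gcd a b : ℕ):ℤ) * Nat.gcdA a b) % (((b / Nat.gcd a b : ℕ):ℤ)) := by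
    unfold x0
    have := Int.emod_nonneg (((m / Nat.gcd a b : ℕ):ℤ) * Nat.gcdA a b)
      (by exact_mod_cast hb'pos.ne' : (((b / Nat.gcd a b : ℕ)):ℤ) ≠ 0)
    omega
  set g := Nat.gcd a b with hgdef
  have hg : 0 < g := Nat.gcd_pos_of_pos_right a hb
  set a' := a / g
  set b' := b / g
  set m' := m / g
  have hag : a = g * a' := (Nat.mul_div_cancel' (Nat.gcd_dvd_left a b)).symm
  have hbg : b = g * b' := (Nat.mul_div_cancel' (Nat.gcd_dvd_right a b)).symm
  have hmg : m = g * m' := (Nat.mul_div_cancel' hm).symm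
  have hb' : 0 < b' := hb'pos
  have hmod := Int.emod_add_mul_ediv ((m' : ℤ) * Nat.gcdA a b) (b' : ℤ)
  set q := ((m' : ℤ) * Nat.gcdA a b) / (b' : ℤ) with hq
  -- m' * gcdA = x0 + b' * q
  have hkey : (m' : ℤ) * Nat.gcdA a b = (x0 a b m : ℤ) + (b' : ℤ) * q := by
    rw [hx0]; linarith [hmod]
  have hbez := Nat.gcd_eq_gcd_ab a b
  -- m - a * x0 = m' * (g - a * gcdA) + a * b' * q  = m' * b * gcdB + a' * b * q
  have hab' : (a:ℤ) * (b':ℤ) = (a':ℤ) * (b:ℤ) := by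
    have : a * b' = a' * b := by
      rw [hag, hbg]; ring
    exact_mod_cast this
  have : (m:ℤ) - (a:ℤ) * (x0 a b m : ℤ)
      = (m':ℤ) * ((b:ℤ) * Nat.gcdB a b) + (a':ℤ) * (b:ℤ) * q := by
    have hm2 : (m:ℤ) = (g:ℤ) * (m':ℤ) := by exact_mod_cast hmg
    have hgz : (g:ℤ) = (a:ℤ) * Nat.gcdA a b + (b:ℤ) * Nat.gcdB a b := by
      rw [hgdef]; exact_mod_cast hbez
    calc (m:ℤ) - (a:ℤ) * (x0 a b m : ℤ)
        = (g:ℤ) * m' - (a:ℤ) * ((m' : ℤ) * Nat.gcdA a b - (b' : ℤ) * q) := by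
          rw [← hm2]; rw [hkey]; ring
      _ = (m':ℤ) * ((g:ℤ) - (a:ℤ) * Nat.gcdA a b) + (a:ℤ) * (b':ℤ) * q := by ring
      _ = (m':ℤ) * ((b:ℤ) * Nat.gcdB a b) + (a':ℤ) * (b:ℤ) * q := by
          rw [hab', hgz]; ring
  rw [this]
  exact dvd_add ⟨(m':ℤ) * Nat.gcdB a b, by ring⟩ ⟨(a':ℤ) * q, by ring⟩

lemma Lset_eq (a b : ℕ) (ha : 0 < a) (hb : 0 < b) (m : ℕ) (hm : Nat.gcd a b ∣ m)
    (hml : a * (b / Nat.gcd a b) ≤ m) :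
    Finset.filter (fun x => a*x ≤ m ∧ b ∣ m - a*x) (range (m+1))
      = Finset.image (fun k => x0 a b m + k * (b / Nat.gcd a b)) (range (Kf a b m + 1)) := by
  have hgpos : 0 < Nat.gcd a b := Nat.gcd_pos_of_pos_right a hb
  set g := Nat.gcd a b with hgdef
  set b' := b / g with hb'def
  set a' := a / g with ha'def
  have hb'pos : 0 < b' := Nat.div_pos (Nat.le_of_dvd hb (Nat.gcd_dvd_right a b)) hgpos
  have hx0lt : x0 a b m < b' := x0_lt a b hb m
  have hx0dvd : (b:ℤ) ∣ (m:ℤ) - (a:ℤ) * (x0 a b m : ℤ) := x0_dvd a b ha hb m hm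
  have hgb : g * b' = b := Nat.mul_div_cancel' (Nat.gcd_dvd_right a b)
  have hga : g * a' = a := Nat.mul_div_cancel' (Nat.gcd_dvd_left a b)
  have hax0 : a * x0 a b m ≤ m := by
    calc a * x0 a b m ≤ a * b' := Nat.mul_le_mul_left a (le_of_lt hx0lt)
      _ ≤ m := hml
  have hx0div : x0 a b m ≤ m / a := (Nat.le_div_iff_mul_le ha).mpr (by rw [Nat.mul_comm]; exact hax0)
  have hKmul : Kf a b m * b' ≤ m / a - x0 a b m := by
    unfold Kf
    rw [← hgdef, ← hb'def]
    exact Nat.div_mul_le_self _ _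
  have hKle : x0 a b m + Kf a b m * b' ≤ m / a := by omega
  have hab' : a * b' = a' * b := by
    rw [← hgb, ← hga]; ring
  ext x
  simp only [Finset.mem_filter, Finset.mem_range, Finset.mem_image]
  constructor
  · rintro ⟨hxm, hax, hdvd⟩
    have hdint : (b:ℤ) ∣ (m:ℤ) - (a:ℤ)*(x:ℤ) := by
      obtain ⟨c, hc⟩ := hdvd
      have hm2 : m = a*x + b*c := by omega
      have hmz : (m:ℤ) = (a:ℤ)*(x:ℤ) + (b:ℤ)*(c:ℤ) := by exact_mod_cast hm2
      exact ⟨c, by linarith⟩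
    have hdiff : (b:ℤ) ∣ (a:ℤ)*((x:ℤ) - (x0 a b m : ℤ)) := by
      have h := dvd_sub hdint hx0dvd
      have he : ((m:ℤ) - (a:ℤ)*(x:ℤ)) - ((m:ℤ) - (a:ℤ)*(x0 a b m:ℤ))
          = -((a:ℤ)*((x:ℤ) - (x0 a b m : ℤ))) := by ring
      rw [he] at h
      exact (dvd_neg.mp h)
    have hb'diff : (b':ℤ) ∣ ((x:ℤ) - (x0 a b m : ℤ)) := by
      obtain ⟨t, ht⟩ := hdiff
      have hgz : ((g:ℕ):ℤ) ≠ 0 := by exact_mod_cast hgpos.ne'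
      have h1 : (a':ℤ) * ((x:ℤ) - (x0 a b m : ℤ)) = (b':ℤ) * t := by
        apply mul_left_cancel₀ hgz
        have haz : (a:ℤ) = (g:ℤ)*(a':ℤ) := by exact_mod_cast hga.symm
        have hbz : (b:ℤ) = (g:ℤ)*(b':ℤ) := by exact_mod_cast hgb.symm
        calc (g:ℤ) * ((a':ℤ) * ((x:ℤ) - (x0 a b m : ℤ)))
            = (a:ℤ)*((x:ℤ) - (x0 a b m : ℤ)) := by rw [haz]; ring
          _ = (b:ℤ) * t := ht
          _ = (g:ℤ) * ((b':ℤ) * t) := by rw [hbz]; ring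
      have hcop : Nat.Coprime a' b' := Nat.coprime_div_gcd_div_gcd hgpos
      have hic : IsCoprime (b':ℤ) (a':ℤ) := by
        rw [Nat.isCoprime_iff_coprime]
        exact hcop.symm
      exact hic.dvd_of_dvd_mul_left ⟨t, h1⟩
    obtain ⟨d, hd⟩ := hb'diff
    have hdnn : 0 ≤ d := by
      by_contra hneg
      push_neg at hneg
      have hd1 : d ≤ -1 := by omega
      have : (b':ℤ)*d ≤ (b':ℤ)*(-1) := by
        apply mul_le_mul_of_nonneg_left hd1
        exact_mod_cast hb'pos.le
      have hx0z : (x0 a b m : ℤ) < (b':ℤ) := by exact_mod_cast hx0lt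
      have hxz : (0:ℤ) ≤ (x:ℤ) := Int.natCast_nonneg x
      linarith
    have hdt : ((d.toNat:ℕ):ℤ) = d := Int.toNat_of_nonneg hdnn
    have hxe : x = x0 a b m + d.toNat * b' := by
      have : (x:ℤ) = (x0 a b m : ℤ) + ((d.toNat:ℕ):ℤ)*(b':ℤ) := by rw [hdt]; linarith
      exact_mod_cast this
    refine ⟨d.toNat, ?_, hxe.symm⟩
    have hxdiv : x ≤ m / a := (Nat.le_div_iff_mul_le ha).mpr (by rw [Nat.mul_comm]; exact hax)
    have : d.toNat * b' ≤ m / a - x0 a b m := by omega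
    have hKf : d.toNat ≤ Kf a b m := by
      unfold Kf
      rw [← hgdef, ← hb'def]
      exact Nat.le_div_iff_mul_le hb'pos |>.mpr this
    omega
  · rintro ⟨k, hk, rfl⟩
    have hk2 : k ≤ Kf a b m := by omega
    have hyle : x0 a b m + k * b' ≤ m / a := by
      have : k * b' ≤ Kf a b m * b' := Nat.mul_le_mul_right b' hk2
      omega
    have hay : a * (x0 a b m + k * b') ≤ m := by
      calc a * (x0 a b m + k * b') ≤ a * (m/a) := Nat.mul_le_mul_left a hyle
        _ ≤ m := Nat.mul_div_le m a
    refine ⟨by calc x0 a b m + k*b' ≤ m/a := hyle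
              _ ≤ m := Nat.div_le_self m a
              _ < m+1 := Nat.lt_succ_self m, hay, ?_⟩
    have hint : (b:ℤ) ∣ (m:ℤ) - (a:ℤ)*((x0 a b m + k * b' : ℕ):ℤ) := by
      have h2 : (b:ℤ) ∣ (a:ℤ)*(k:ℤ)*(b':ℤ) := by
        have : (a:ℤ)*(b':ℤ) = (a':ℤ)*(b:ℤ) := by exact_mod_cast hab'
        exact ⟨(a':ℤ)*(k:ℤ), by linear_combination (k:ℤ) * this⟩
      have h := dvd_sub hx0dvd h2
      have he : ((m:ℤ) - (a:ℤ)*(x0 a b m:ℤ)) - (a:ℤ)*(k:ℤ)*(b':ℤ)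
          = (m:ℤ) - (a:ℤ)*((x0 a b m + k * b' : ℕ):ℤ) := by push_cast; ring
      rwa [he] at h
    have : (b:ℤ) ∣ ((m - a*(x0 a b m + k * b') : ℕ):ℤ) := by
      rw [Nat.cast_sub hay]
      push_cast
      push_cast at hint
      exact hint
    exact_mod_cast this

lemma Kf_est (a b : ℕ) (ha : 0 < a) (hb : 0 < b) (m : ℕ)
    (hml : a * (b / Nat.gcd a b) ≤ m) :
    Kf a b m * (a * (b / Nat.gcd a b)) ≤ m ∧ m < (Kf a b m + 2) * (a * (b / Nat.gcd a b)) := by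
  have hgpos : 0 < Nat.gcd a b := Nat.gcd_pos_of_pos_right a hb
  set g := Nat.gcd a b with hgdef
  set b' := b / g with hb'def
  have hb'pos : 0 < b' := Nat.div_pos (Nat.le_of_dvd hb (Nat.gcd_dvd_right a b)) hgpos
  have hx0lt : x0 a b m < b' := x0_lt a b hb m
  have hax0 : a * x0 a b m ≤ m := by
    calc a * x0 a b m ≤ a * b' := Nat.mul_le_mul_left a (le_of_lt hx0lt)
      _ ≤ m := hml
  have hx0div : x0 a b m ≤ m / a := (Nat.le_div_iff_mul_le ha).mpr (by rw [Nat.mul_comm]; exact hax0)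
  have hKdef : Kf a b m = (m / a - x0 a b m) / b' := by
    unfold Kf; rw [← hgdef, ← hb'def]
  constructor
  · have h1 : Kf a b m ≤ (m/a)/b' := by
      rw [hKdef]
      exact Nat.div_le_div_right (Nat.sub_le _ _)
    have h2 : (m/a)/b' = m/(a*b') := Nat.div_div_eq_div_mul m a b'
    calc Kf a b m * (a*b') ≤ (m/(a*b')) * (a*b') := by
          apply Nat.mul_le_mul_right; omega
      _ ≤ m := Nat.div_mul_le_self m (a*b')
  · have h1 : m/a - x0 a b m < (Kf a b m + 1)*b' := by
      rw [hKdef]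
      exact (Nat.div_lt_iff_lt_mul hb'pos).mp (Nat.lt_succ_self _)
    have h2 : m < (m/a + 1)*a := (Nat.div_lt_iff_lt_mul ha).mp (Nat.lt_succ_self _)
    have h3 : m/a + 1 ≤ x0 a b m + (Kf a b m + 1)*b' := by omega
    calc m < (m/a + 1)*a := h2
      _ ≤ (x0 a b m + (Kf a b m + 1)*b')*a := Nat.mul_le_mul_right a h3
      _ ≤ (b' + (Kf a b m + 1)*b')*a := by
          apply Nat.mul_le_mul_right
          omega
      _ = (Kf a b m + 2)*(a*b') := by ring

lemma div_lin_tendsto (N : ℕ → ℕ) (c C : ℝ) (F : Filter ℕ) (hF : F ≤ atTop)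
    (h : ∀ᶠ m in F, |(N m:ℝ) - c*(m:ℝ)| ≤ C) :
    Tendsto (fun m => (N m:ℝ)/(m:ℝ)) F (nhds c) := by
  have h0 : Tendsto (fun m => ((N m:ℝ) - c*(m:ℝ))/(m:ℝ)) F (nhds 0) := by
    refine squeeze_zero_norm' (f := fun m => ((N m:ℝ) - c*(m:ℝ))/(m:ℝ))
      (a := fun m => C * (1/(m:ℝ))) ?_ ?_
    · filter_upwards [h, hF (eventually_ge_atTop 1)] with m hm hm1
      have hm0 : (0:ℝ) < (m:ℝ) := by exact_mod_cast hm1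
      rw [Real.norm_eq_abs, abs_div, abs_of_pos hm0, div_le_iff₀ hm0]
      calc |(N m:ℝ) - c*(m:ℝ)| ≤ C := hm
        _ = C * (1/(m:ℝ)) * (m:ℝ) := by field_simp
    · have := (tendsto_one_div_atTop_nhds_zero_nat.mono_left hF).const_mul C
      simpa using this
  have h1 : Tendsto (fun m => c + ((N m:ℝ) - c*(m:ℝ))/(m:ℝ)) F (nhds (c + 0)) :=
    tendsto_const_nhds.add h0
  rw [add_zero] at h1
  refine h1.congr' ?_
  filter_upwards [hF (eventually_ge_atTop 1)] with m hm1
  have hm0 : (m:ℝ) ≠ 0 := by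
    have : (0:ℝ) < (m:ℝ) := by exact_mod_cast hm1
    linarith
  field_simp
  ring

lemma Pj_tendsto (a b : ℕ) (ha : 0 < a) (hb : 0 < b) (j : ℕ) :
    Tendsto (fun m => (∑ x ∈ Finset.filter (fun x => a*x ≤ m ∧ b ∣ m - a*x) (range (m+1)),
        (x:ℝ)^j) / (m:ℝ)^(j+1))
      (atTop ⊓ Filter.principal {m | Nat.gcd a b ∣ m})
      (nhds (((b / Nat.gcd a b : ℕ):ℝ)^j *
        ((1/((a:ℝ)*((b / Nat.gcd a b : ℕ):ℝ)))^(j+1)/((j:ℝ)+1)))) := by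
  have hgpos : 0 < Nat.gcd a b := Nat.gcd_pos_of_pos_right a hb
  set g := Nat.gcd a b with hgdef
  set b' := b / g with hb'def
  have hb'pos : 0 < b' := Nat.div_pos (Nat.le_of_dvd hb (Nat.gcd_dvd_right a b)) hgpos
  set F := atTop ⊓ Filter.principal {m | g ∣ m} with hFdef
  have hF : F ≤ atTop := inf_le_left
  have hdvd_ev : ∀ᶠ m in F, g ∣ m := by
    rw [hFdef]
    exact eventually_inf_principal.mpr (Eventually.of_forall fun m hm => hm)
  have hml_ev : ∀ᶠ m in F, a * b' ≤ m := hF (eventually_ge_atTop _)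
  have hab'R : (0:ℝ) < (a:ℝ)*(b':ℝ) := by
    have : 0 < a * b' := Nat.mul_pos ha hb'pos
    exact_mod_cast this
  have hest : ∀ᶠ m in F, Kf a b m * (a * b') ≤ m ∧ m < (Kf a b m + 2) * (a * b') := by
    filter_upwards [hml_ev] with m hm
    exact Kf_est a b ha hb m hm
  set c : ℝ := 1/((a:ℝ)*(b':ℝ)) with hcdef
  have hcm : ∀ m : ℕ, c * (m:ℝ) = (m:ℝ)/((a:ℝ)*(b':ℝ)) := by
    intro m; rw [hcdef]; ring
  have hN1 : Tendsto (fun m => ((Kf a b m + 1 : ℕ):ℝ)/(m:ℝ)) F (nhds c) := by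
    apply div_lin_tendsto _ c 1 F hF
    filter_upwards [hest] with m hm
    obtain ⟨h1, h2⟩ := hm
    have h1' : (Kf a b m:ℝ) * ((a:ℝ)*(b':ℝ)) ≤ (m:ℝ) := by exact_mod_cast h1
    have h2' : (m:ℝ) < ((Kf a b m:ℝ) + 2) * ((a:ℝ)*(b':ℝ)) := by exact_mod_cast h2
    rw [abs_le, hcm]
    have hA : (Kf a b m:ℝ) ≤ (m:ℝ)/((a:ℝ)*(b':ℝ)) := (le_div_iff₀ hab'R).mpr h1'
    have hB : (m:ℝ)/((a:ℝ)*(b':ℝ)) < (Kf a b m:ℝ) + 2 := (div_lt_iff₀ hab'R).mpr h2'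
    push_cast
    constructor <;> linarith
  have hN2 : Tendsto (fun m => ((Kf a b m + 2 : ℕ):ℝ)/(m:ℝ)) F (nhds c) := by
    apply div_lin_tendsto _ c 2 F hF
    filter_upwards [hest] with m hm
    obtain ⟨h1, h2⟩ := hm
    have h1' : (Kf a b m:ℝ) * ((a:ℝ)*(b':ℝ)) ≤ (m:ℝ) := by exact_mod_cast h1
    have h2' : (m:ℝ) < ((Kf a b m:ℝ) + 2) * ((a:ℝ)*(b':ℝ)) := by exact_mod_cast h2
    rw [abs_le, hcm]
    have hA : (Kf a b m:ℝ) ≤ (m:ℝ)/((a:ℝ)*(b':ℝ)) := (le_div_iff₀ hab'R).mpr h1'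
    have hB : (m:ℝ)/((a:ℝ)*(b':ℝ)) < (Kf a b m:ℝ) + 2 := (div_lt_iff₀ hab'R).mpr h2'
    push_cast
    constructor <;> linarith
  have hlow := (key_tendsto j (fun m => Kf a b m + 1) c F hF hN1).const_mul ((b':ℝ)^j)
  have hhigh := (key_tendsto j (fun m => Kf a b m + 2) c F hF hN2).const_mul ((b':ℝ)^j)
  apply tendsto_of_tendsto_of_tendsto_of_le_of_le' hlow hhigh
  · -- lower bound eventually
    filter_upwards [hdvd_ev, hml_ev, hF (eventually_ge_atTop 1)] with m hmd hml hm1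
    have hLset := Lset_eq a b ha hb m hmd hml
    have hinj : ∀ x ∈ range (Kf a b m + 1), ∀ y ∈ range (Kf a b m + 1),
        x0 a b m + x * b' = x0 a b m + y * b' → x = y := by
      intro x _ y _ hxy
      have : x * b' = y * b' := by omega
      exact Nat.eq_of_mul_eq_mul_right hb'pos this
    have hPsum : ∑ x ∈ Finset.filter (fun x => a*x ≤ m ∧ b ∣ m - a*x) (range (m+1)), (x:ℝ)^j
        = ∑ k ∈ range (Kf a b m + 1), ((x0 a b m + k * b' : ℕ):ℝ)^j := by
      rw [hLset, Finset.sum_image hinj]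
    have hm0 : (0:ℝ) < (m:ℝ)^(j+1) := by
      have : (0:ℝ) < (m:ℝ) := by exact_mod_cast hm1
      positivity
    rw [hPsum, mul_div_assoc']
    gcongr
    rw [Finset.mul_sum]
    apply Finset.sum_le_sum
    intro k _
    have h1 : (b':ℝ)^j * (k:ℝ)^j = ((k*b' : ℕ):ℝ)^j := by
      push_cast; rw [← mul_pow]; ring_nf
    rw [h1]
    apply pow_le_pow_left₀ (by positivity)
    push_cast; linarith
  · -- upper bound eventually
    filter_upwards [hdvd_ev, hml_ev, hF (eventually_ge_atTop 1)] with m hmd hml hm1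
    have hLset := Lset_eq a b ha hb m hmd hml
    have hinj : ∀ x ∈ range (Kf a b m + 1), ∀ y ∈ range (Kf a b m + 1),
        x0 a b m + x * b' = x0 a b m + y * b' → x = y := by
      intro x _ y _ hxy
      have : x * b' = y * b' := by omega
      exact Nat.eq_of_mul_eq_mul_right hb'pos this
    have hPsum : ∑ x ∈ Finset.filter (fun x => a*x ≤ m ∧ b ∣ m - a*x) (range (m+1)), (x:ℝ)^j
        = ∑ k ∈ range (Kf a b m + 1), ((x0 a b m + k * b' : ℕ):ℝ)^j := by
      rw [hLset, Finset.sum_image hinj]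
    have hm0 : (0:ℝ) < (m:ℝ)^(j+1) := by
      have : (0:ℝ) < (m:ℝ) := by exact_mod_cast hm1
      positivity
    rw [hPsum, mul_div_assoc']
    gcongr
    rw [Finset.mul_sum]
    calc ∑ k ∈ range (Kf a b m + 1), ((x0 a b m + k * b' : ℕ):ℝ)^j
        ≤ ∑ k ∈ range (Kf a b m + 1), (b':ℝ)^j * ((k:ℝ)+1)^j := by
          apply Finset.sum_le_sum
          intro k _
          have h1 : (b':ℝ)^j * ((k:ℝ)+1)^j = ((b':ℝ)*((k:ℝ)+1))^j := by rw [← mul_pow]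
          rw [h1]
          apply pow_le_pow_left₀ (by positivity)
          have hx0lt : x0 a b m < b' := x0_lt a b hb m
          have : (x0 a b m : ℝ) < (b':ℝ) := by exact_mod_cast hx0lt
          push_cast
          nlinarith [(Nat.cast_nonneg k : (0:ℝ) ≤ (k:ℝ)), (Nat.cast_nonneg b' : (0:ℝ) ≤ (b':ℝ))]
      _ ≤ ∑ k ∈ range (Kf a b m + 2), (b':ℝ)^j * (k:ℝ)^j := by
          rw [Finset.sum_range_succ' (fun k => (b':ℝ)^j * (k:ℝ)^j) (Kf a b m + 1)]
          have : ∑ k ∈ range (Kf a b m + 1), (b':ℝ)^j * ((k:ℝ)+1)^j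
              = ∑ i ∈ range (Kf a b m + 1), (b':ℝ)^j * (((i+1:ℕ)):ℝ)^j := by
            apply Finset.sum_congr rfl
            intro k _; push_cast; ring
          rw [this]
          have h0 : (0:ℝ) ≤ (b':ℝ)^j * ((0:ℕ):ℝ)^j := by positivity
          linarith

theorem stmt17 (a b : ℕ) (ha : 0 < a) (hb : 0 < b) (α₁ α₂ : ℝ) (n : ℕ) :
    Tendsto (fun m : ℕ =>
        ((∑ l ∈ Finset.filter (fun l : ℕ × ℕ => a * l.1 + b * l.2 = m)
              ((Finset.range (m + 1)) ×ˢ (Finset.range (m + 1))),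
            (α₁ * l.1 + α₂ * l.2) ^ n / (Nat.factorial n : ℝ))
          - ((Nat.gcd a b : ℝ) / ((a : ℝ) * b))
            * (∑ p ∈ Finset.range (n + 1), (α₁ / a) ^ p * (α₂ / b) ^ (n - p))
            * (m : ℝ) ^ (n + 1) / (Nat.factorial (n + 1) : ℝ))
        / (m : ℝ) ^ (n + 1))
      (atTop ⊓ Filter.principal {m | Nat.gcd a b ∣ m}) (nhds 0) := by
  have hgpos : 0 < Nat.gcd a b := Nat.gcd_pos_of_pos_right a hb
  set g := Nat.gcd a b with hgdef
  set b' := b / g with hb'def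
  have hb'pos : 0 < b' := Nat.div_pos (Nat.le_of_dvd hb (Nat.gcd_dvd_right a b)) hgpos
  have hgb : g * b' = b := Nat.mul_div_cancel' (Nat.gcd_dvd_right a b)
  have haR : ((a:ℝ)) ≠ 0 := by exact_mod_cast ha.ne'
  have hbR : ((b:ℝ)) ≠ 0 := by exact_mod_cast hb.ne'
  have hb'R : ((b':ℝ)) ≠ 0 := by exact_mod_cast hb'pos.ne'
  have hgR : ((g:ℝ)) ≠ 0 := by exact_mod_cast hgpos.ne'
  obtain ⟨w, hwdef⟩ : ∃ w : ℝ, w = α₂ / (b:ℝ) := ⟨_, rfl⟩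
  obtain ⟨u, hudef⟩ : ∃ u : ℝ, u = α₁ - (a:ℝ) * w := ⟨_, rfl⟩
  obtain ⟨v, hvdef⟩ : ∃ v : ℝ, v = α₁/(a:ℝ) - w := ⟨_, rfl⟩
  have huv : u = (a:ℝ) * v := by rw [hudef, hvdef]; field_simp
  set F := atTop ⊓ Filter.principal {m | g ∣ m} with hFdef
  have hF : F ≤ atTop := inf_le_left
  -- Step 1: double sum to single sum
  have hT : ∀ m : ℕ, (∑ l ∈ Finset.filter (fun l : ℕ × ℕ => a * l.1 + b * l.2 = m)
        ((Finset.range (m + 1)) ×ˢ (Finset.range (m + 1))),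
        (α₁ * l.1 + α₂ * l.2) ^ n / (Nat.factorial n : ℝ))
      = ∑ x ∈ Finset.filter (fun x => a*x ≤ m ∧ b ∣ m - a*x) (range (m+1)),
        (α₁ * x + α₂ * (((m - a*x)/b : ℕ):ℝ)) ^ n / (Nat.factorial n : ℝ) := by
    intro m
    refine Finset.sum_nbij' (i := fun l : ℕ × ℕ => l.1)
      (j := fun x => (x, (m - a*x)/b)) ?_ ?_ ?_ ?_ ?_
    · rintro ⟨l1, l2⟩ hl
      simp only [Finset.mem_filter, Finset.mem_product, Finset.mem_range] at hl ⊢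
      obtain ⟨⟨h1, h2⟩, heq⟩ := hl
      have hle : a * l1 ≤ m := heq ▸ Nat.le_add_right _ _
      refine ⟨h1, hle, ⟨l2, ?_⟩⟩
      rw [← heq]
      exact Nat.add_sub_cancel_left (a*l1) (b*l2)
    · intro x hx
      simp only [Finset.mem_filter, Finset.mem_product, Finset.mem_range] at hx ⊢
      obtain ⟨hxm, hax, hdvd⟩ := hx
      have hdivle : (m - a*x)/b ≤ m := le_trans (Nat.div_le_self _ _) (by omega)
      refine ⟨⟨hxm, by omega⟩, ?_⟩
      rw [Nat.mul_div_cancel' hdvd]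
      omega
    · rintro ⟨l1, l2⟩ hl
      simp only [Finset.mem_filter, Finset.mem_product, Finset.mem_range] at hl
      obtain ⟨⟨h1, h2⟩, heq⟩ := hl
      have hsub : m - a * l1 = b * l2 := by
        rw [← heq]; exact Nat.add_sub_cancel_left (a*l1) (b*l2)
      simp only [hsub, Nat.mul_div_cancel_left l2 hb]
    · intro x hx
      rfl
    · rintro ⟨l1, l2⟩ hl
      simp only [Finset.mem_filter, Finset.mem_product, Finset.mem_range] at hl
      obtain ⟨⟨h1, h2⟩, heq⟩ := hl
      have hsub : m - a * l1 = b * l2 := by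
        rw [← heq]; exact Nat.add_sub_cancel_left (a*l1) (b*l2)
      simp only [hsub, Nat.mul_div_cancel_left l2 hb]
  -- Step 2: expand to power sums
  have hT2 : ∀ m : ℕ,
      (∑ x ∈ Finset.filter (fun x => a*x ≤ m ∧ b ∣ m - a*x) (range (m+1)),
        (α₁ * x + α₂ * (((m - a*x)/b : ℕ):ℝ)) ^ n / (Nat.factorial n : ℝ))
      = ∑ j ∈ range (n+1), ((n.choose j : ℝ) * u^j * w^(n-j) * (m:ℝ)^(n-j)
            / (Nat.factorial n : ℝ))
          * (∑ x ∈ Finset.filter (fun x => a*x ≤ m ∧ b ∣ m - a*x) (range (m+1)), (x:ℝ)^j) := by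
    intro m
    have hstep : ∀ x ∈ Finset.filter (fun x => a*x ≤ m ∧ b ∣ m - a*x) (range (m+1)),
        (α₁ * x + α₂ * (((m - a*x)/b : ℕ):ℝ)) ^ n / (Nat.factorial n : ℝ)
        = ∑ j ∈ range (n+1), ((n.choose j : ℝ) * u^j * w^(n-j) * (m:ℝ)^(n-j)
            / (Nat.factorial n : ℝ)) * (x:ℝ)^j := by
      intro x hx
      simp only [Finset.mem_filter, Finset.mem_range] at hx
      obtain ⟨hxm, hax, hdvd⟩ := hx
      have hcast : (((m - a*x)/b : ℕ):ℝ) = ((m:ℝ) - (a:ℝ)*(x:ℝ))/(b:ℝ) := by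
        rw [Nat.cast_div hdvd hbR, Nat.cast_sub hax]
        push_cast
        ring
      have hval : α₁ * x + α₂ * (((m - a*x)/b : ℕ):ℝ) = u * x + w * m := by
        rw [hcast, hudef, hwdef]
        field_simp
        ring
      rw [hval, add_pow, Finset.sum_div]
      apply Finset.sum_congr rfl
      intro j hj
      ring
    rw [Finset.sum_congr rfl hstep]
    rw [Finset.sum_comm]
    apply Finset.sum_congr rfl
    intro j hj
    rw [Finset.mul_sum]
  -- Step 3: limit of the normalized power sums
  obtain ⟨c, hcdef⟩ : ∃ c : ℕ → ℝ, ∀ j,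
      c j = (n.choose j : ℝ) * u^j * w^(n-j) / (Nat.factorial n : ℝ) := ⟨_, fun j => rfl⟩
  have hmain : Tendsto (fun m => ∑ j ∈ range (n+1), c j *
      ((∑ x ∈ Finset.filter (fun x => a*x ≤ m ∧ b ∣ m - a*x) (range (m+1)), (x:ℝ)^j)
        / (m:ℝ)^(j+1))) F
      (nhds (∑ j ∈ range (n+1), c j *
        ((b':ℝ)^j * ((1/((a:ℝ)*(b':ℝ)))^(j+1)/((j:ℝ)+1))))) := by
    apply tendsto_finset_sum
    intro j hj
    exact (Pj_tendsto a b ha hb j).const_mul (c j)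
  -- Step 4: the limit value equals the stated constant
  have hfact1 : ((Nat.factorial n : ℕ):ℝ) ≠ 0 := by
    exact_mod_cast (Nat.factorial_pos n).ne'
  have hfact2 : ((Nat.factorial (n+1) : ℕ):ℝ) ≠ 0 := by
    exact_mod_cast (Nat.factorial_pos (n+1)).ne'
  have hident : (∑ j ∈ range (n+1), c j *
        ((b':ℝ)^j * ((1/((a:ℝ)*(b':ℝ)))^(j+1)/((j:ℝ)+1))))
      = ((g : ℝ) / ((a : ℝ) * b))
            * (∑ p ∈ Finset.range (n + 1), (α₁ / (a:ℝ)) ^ p * (α₂ / (b:ℝ)) ^ (n - p))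
            / (Nat.factorial (n + 1) : ℝ) := by
    have hterm : ∀ j ∈ range (n+1), c j *
        ((b':ℝ)^j * ((1/((a:ℝ)*(b':ℝ)))^(j+1)/((j:ℝ)+1)))
        = (1/((a:ℝ)*(b':ℝ)*(Nat.factorial (n+1) : ℝ)))
            * (((n+1).choose (j+1) : ℝ) * v^j * w^(n-j)) := by
      intro j hj
      have hch : ((n:ℝ)+1) * (n.choose j :ℝ) = ((n+1).choose (j+1):ℝ) * ((j:ℝ)+1) := by
        exact_mod_cast Nat.add_one_mul_choose_eq n j
      have hjpos : ((j:ℝ)+1) ≠ 0 := by positivity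
      have hA : (n.choose j : ℝ)/(((j:ℝ)+1) * (Nat.factorial n : ℝ))
          = ((n+1).choose (j+1) : ℝ)/(Nat.factorial (n+1) : ℝ) := by
        rw [div_eq_div_iff (by positivity) (by positivity)]
        have : (Nat.factorial (n+1) : ℝ) = ((n:ℝ)+1) * (Nat.factorial n : ℝ) := by
          rw [Nat.factorial_succ]; push_cast; ring
        rw [this]
        linear_combination (Nat.factorial n : ℝ) * hch
      have hB : (a:ℝ)^j*(b':ℝ)^j/(((a:ℝ)*(b':ℝ))^(j+1)) = 1/((a:ℝ)*(b':ℝ)) := by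
        rw [pow_succ, mul_pow]
        field_simp
      calc c j * ((b':ℝ)^j * ((1/((a:ℝ)*(b':ℝ)))^(j+1)/((j:ℝ)+1)))
          = ((n.choose j : ℝ)/(((j:ℝ)+1) * (Nat.factorial n : ℝ)))
              * ((a:ℝ)^j*(b':ℝ)^j/(((a:ℝ)*(b':ℝ))^(j+1))) * (v^j * w^(n-j)) := by
            rw [hcdef j, huv, div_pow, one_pow, mul_pow]
            field_simp
        _ = (((n+1).choose (j+1) : ℝ)/(Nat.factorial (n+1) : ℝ))
              * (1/((a:ℝ)*(b':ℝ))) * (v^j * w^(n-j)) := by rw [hA, hB]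
        _ = (1/((a:ℝ)*(b':ℝ)*(Nat.factorial (n+1) : ℝ)))
              * (((n+1).choose (j+1) : ℝ) * v^j * w^(n-j)) := by ring
    rw [Finset.sum_congr rfl hterm, ← Finset.mul_sum, choose_identity v w n]
    have hvw : v + w = α₁/(a:ℝ) := by rw [hvdef]; ring
    rw [hvw, hwdef]
    have hbb' : (b:ℝ) = (g:ℝ)*(b':ℝ) := by exact_mod_cast hgb.symm
    rw [hbb']
    field_simp
  -- Step 5: assemble
  have hTlim : Tendsto (fun m => (∑ l ∈ Finset.filter (fun l : ℕ × ℕ => a * l.1 + b * l.2 = m)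
        ((Finset.range (m + 1)) ×ˢ (Finset.range (m + 1))),
        (α₁ * l.1 + α₂ * l.2) ^ n / (Nat.factorial n : ℝ)) / (m:ℝ)^(n+1)) F
      (nhds (((g : ℝ) / ((a : ℝ) * b))
            * (∑ p ∈ Finset.range (n + 1), (α₁ / (a:ℝ)) ^ p * (α₂ / (b:ℝ)) ^ (n - p))
            / (Nat.factorial (n + 1) : ℝ))) := by
    rw [← hident]
    refine hmain.congr' ?_
    filter_upwards [hF (eventually_ge_atTop 1)] with m hm1
    have hm0 : (m:ℝ) ≠ 0 := by
      have : (0:ℝ) < (m:ℝ) := by exact_mod_cast hm1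
      linarith
    rw [hT m, hT2 m, Finset.sum_div]
    apply Finset.sum_congr rfl
    intro j hj
    rw [Finset.mem_range] at hj
    have hsplit : (m:ℝ)^(n+1) = (m:ℝ)^(n-j) * (m:ℝ)^(j+1) := by
      rw [← pow_add]
      congr 1
      omega
    rw [hcdef j, hsplit]
    have hmj : ((m:ℝ))^(j+1) ≠ 0 := by positivity
    have hmnj : ((m:ℝ))^(n-j) ≠ 0 := by positivity
    field_simp
  have hfinal := hTlim.sub_const (((g : ℝ) / ((a : ℝ) * b))
            * (∑ p ∈ Finset.range (n + 1), (α₁ / (a:ℝ)) ^ p * (α₂ / (b:ℝ)) ^ (n - p))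
            / (Nat.factorial (n + 1) : ℝ))
  rw [sub_self] at hfinal
  refine hfinal.congr' ?_
  filter_upwards [hF (eventually_ge_atTop 1)] with m hm1
  have hm0 : ((m:ℝ))^(n+1) ≠ 0 := by
    have : (0:ℝ) < (m:ℝ) := by exact_mod_cast hm1
    positivity
  rw [sub_div]
  congr 1
  field_simp
end
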